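/- If τ : ℤ³ → F is nowhere zero and satisfies the lattice AKP equation A·τ̃τ̂̇ + B·τ̂τ̃̇ + C·τ̇τ̃̂ = 0 everywhere, then for each j ∈ {1,2,3,4} the scalar conservation law (A·P₁ⱼ + B·P₂ⱼ + C·P₃ⱼ)~ − (A·P₁ⱼ + B·P₂ⱼ + C·P₃ⱼ) + (A·Q₁ⱼ + B·Q₂ⱼ + C·Q₃ⱼ)^ − (…) + (A·R₁ⱼ + B·R₂ⱼ + C·R₃ⱼ)˙ − (…) = 0 holds, where P, Q, R are the explicit matrices from the matrix conservation law. -/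

import Mathlib

variable {F : Type*} [Field F]

/-- The matrix P of the matrix conservation law. -/
def matP (t : ℤ → ℤ → ℤ → F) (k l m : ℤ) : Matrix (Fin 3) (Fin 4) F :=
  !![ -(t (k+1) l m * t (k-1) (l+1) (m+1)) / (t k (l+1) m * t k l (m+1)), 0, 0,
      -(t k l m * t k (l+1) (m+1)) / (t k (l+1) m * t k l (m+1));
      -(t (k+1) l m * t (k-1) (l+1) m) / (t k (l+1) m * t k l m), 0,
      t k l (m+1) * t k (l+1) (m-1) / (t k (l+1) m * t k l m), 0;
      -(t (k+1) l m * t (k-1) l (m+1)) / (t k l (m+1) * t k l m),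
      t k (l+1) m * t k (l-1) (m+1) / (t k l (m+1) * t k l m), 0, 0]

/-- The matrix Q of the matrix conservation law. -/
def matQ (t : ℤ → ℤ → ℤ → F) (k l m : ℤ) : Matrix (Fin 3) (Fin 4) F :=
  !![ 0, -(t k (l+1) m * t (k+1) (l-1) m) / (t (k+1) l m * t k l m),
      t k l (m+1) * t (k+1) l (m-1) / (t (k+1) l m * t k l m), 0;
      0, -(t k (l+1) m * t (k+1) (l-1) (m+1)) / (t (k+1) l m * t k l (m+1)), 0,
      -(t k l m * t (k+1) l (m+1)) / (t (k+1) l m * t k l (m+1));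
      t (k+1) l m * t (k-1) l (m+1) / (t k l (m+1) * t k l m),
      -(t k (l+1) m * t k (l-1) (m+1)) / (t k l (m+1) * t k l m), 0, 0]

/-- The matrix R of the matrix conservation law. -/
def matR (t : ℤ → ℤ → ℤ → F) (k l m : ℤ) : Matrix (Fin 3) (Fin 4) F :=
  !![ 0, t k (l+1) m * t (k+1) (l-1) m / (t (k+1) l m * t k l m),
      -(t k l (m+1) * t (k+1) l (m-1)) / (t (k+1) l m * t k l m), 0;
      t (k+1) l m * t (k-1) (l+1) m / (t k (l+1) m * t k l m), 0,
      -(t k l (m+1) * t k (l+1) (m-1)) / (t k (l+1) m * t k l m), 0;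
      0, 0, -(t k l (m+1) * t (k+1) (l+1) (m-1)) / (t (k+1) l m * t k (l+1) m),
      -(t (k+1) (l+1) m * t k l m) / (t (k+1) l m * t k (l+1) m)]

/-- The vector V. -/
def vecV (t : ℤ → ℤ → ℤ → F) (k l m : ℤ) : Fin 3 → F :=
  ![t k (l+1) (m+1) * t (k+1) l m, t (k+1) l (m+1) * t k (l+1) m,
    t (k+1) (l+1) m * t k l (m+1)]

/-- The vector W of AKP conservation-law characteristics. -/
def vecW (t : ℤ → ℤ → ℤ → F) (k l m : ℤ) : Fin 4 → F :=
  ![t (k-1) (l+1) (m+1) / (t k (l+1) (m+1) * t k (l+1) m * t k l (m+1))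
      - t (k+2) l m / (t (k+1) l m * t (k+1) (l+1) m * t (k+1) l (m+1)),
    t (k+1) (l-1) (m+1) / (t (k+1) l (m+1) * t (k+1) l m * t k l (m+1))
      - t k (l+2) m / (t k (l+1) m * t k (l+1) (m+1) * t (k+1) (l+1) m),
    t (k+1) (l+1) (m-1) / (t (k+1) (l+1) m * t (k+1) l m * t k (l+1) m)
      - t k l (m+2) / (t k l (m+1) * t (k+1) l (m+1) * t k (l+1) (m+1)),
    t k l m / (t (k+1) l m * t k (l+1) m * t k l (m+1))
      - t (k+1) (l+1) (m+1) / (t (k+1) (l+1) m * t k (l+1) (m+1) * t (k+1) l (m+1))]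

/-!
The matrix conservation law `Δₖ P + Δₗ Q + Δₘ R = V Wᵀ` is an identity of rational functions in
the values of `τ`, valid for every nowhere-zero `τ`. Multiplying it on the left by the row
`(A, B, C)` gives the four scalar laws with right-hand side `(A V₀ + B V₁ + C V₂) W`, and
`A V₀ + B V₁ + C V₂` is the left-hand side of the AKP equation.
-/

open Matrix

theorem matrix_conservation_law (t : ℤ → ℤ → ℤ → F) (ht : ∀ k l m, t k l m ≠ 0) (k l m : ℤ) :
    matP t (k+1) l m - matP t k l m + (matQ t k (l+1) m - matQ t k l m)
      + (matR t k l (m+1) - matR t k l m) = vecMulVec (vecV t k l m) (vecW t k l m) := by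
  have add_one_add_one (a : ℤ) : a + 1 + 1 = a + 2 := by ring
  ext i j
  fin_cases i <;> fin_cases j <;>
  · simp only [matP, matQ, matR, vecV, vecW, add_one_add_one, add_sub_cancel_right, of_sub_of,
      of_add_of, sub_cons, add_cons, head_cons, tail_cons, sub_self, zero_empty, add_zero, zero_add,
      empty_add_empty, Fin.zero_eta, Fin.isValue, Fin.reduceFinMk, Fin.mk_one, Matrix.add_apply,
      of_apply, cons_val', cons_val, Pi.zero_apply, cons_val_fin_one, cons_val_zero, cons_val_one,
      vecMulVec_apply]
    field_simp [ht]
    ring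

theorem dotProduct_vecV_eq_zero {A B C : F} {t : ℤ → ℤ → ℤ → F} {k l m : ℤ}
    (hAKP : A * (t (k+1) l m * t k (l+1) (m+1)) + B * (t k (l+1) m * t (k+1) l (m+1))
      + C * (t k l (m+1) * t (k+1) (l+1) m) = 0) :
    ![A, B, C] ⬝ᵥ vecV t k l m = 0 := by
  rw [← hAKP]
  simp only [vecV, dotProduct, Fin.sum_univ_three, cons_val_zero, cons_val_one, cons_val_two,
    head_cons, tail_cons]
  ring

theorem akp_four_conservation_laws (A B C : F) (t : ℤ → ℤ → ℤ → F)
    (ht : ∀ k l m : ℤ, t k l m ≠ 0)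
    (hAKP : ∀ k l m : ℤ,
      A * (t (k+1) l m * t k (l+1) (m+1)) + B * (t k (l+1) m * t (k+1) l (m+1))
        + C * (t k l (m+1) * t (k+1) (l+1) m) = 0) :
    ∀ (j : Fin 4) (k l m : ℤ),
      let S : ℤ → ℤ → ℤ → F := fun k l m =>
        A * matP t k l m 0 j + B * matP t k l m 1 j + C * matP t k l m 2 j
      let T : ℤ → ℤ → ℤ → F := fun k l m =>
        A * matQ t k l m 0 j + B * matQ t k l m 1 j + C * matQ t k l m 2 j
      let U : ℤ → ℤ → ℤ → F := fun k l m =>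
        A * matR t k l m 0 j + B * matR t k l m 1 j + C * matR t k l m 2 j
      S (k+1) l m - S k l m + T k (l+1) m - T k l m + U k l (m+1) - U k l m = 0 := by
  intro j k l m
  have h := congrFun (congrArg (vecMul ![A, B, C]) (matrix_conservation_law t ht k l m)) j
  rw [vecMul_vecMulVec, dotProduct_vecV_eq_zero (hAKP k l m), zero_smul] at h
  simp only [vecMul, dotProduct, Fin.sum_univ_three, Matrix.add_apply, Matrix.sub_apply,
    cons_val_zero, cons_val_one, cons_val_two, head_cons, tail_cons, Pi.zero_apply] at h
  linear_combination h
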